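/- arXiv:math/9912138 — 4 statements merged into one kernel-verified Lean document; each statement's English description precedes it below -/
import Mathlib

section
/- Let A be a commutative ring and let F(X) = X^n - u₁X^{n-1} + ... + (-1)^n uₙ be a monic polynomial in A[X]. Then the coefficients u₁, ..., uₙ are all nilpotent in A if and only if X lies in the radical of the ideal generated by F(X) in A[X]. -/
/-!
If `F` is monic of degree `n`, then `X ∈ √(F)` says `F ∣ X ^ k` for some `k`. Modulo any prime `P`
of `A`, a monic divisor of `X ^ k` in the domain `(A ⧸ P)[X]` must be `X ^ n` (compare degrees and
trailing degrees), so every lower coefficient of `F` lies in every prime, i.e. is nilpotent.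
Conversely, if those coefficients are nilpotent then `X ^ n ≡ X ^ n - F (mod F)` is nilpotent.
-/

open Polynomial

namespace Polynomial

variable {R : Type*} [CommRing R] {f : R[X]}

theorem Monic.eq_X_pow_of_dvd_X_pow [IsDomain R] (hf : f.Monic) {k : ℕ} (h : f ∣ X ^ k) :
    f = X ^ f.natDegree := by
  obtain ⟨g, hg⟩ := h
  have hg0 : g ≠ 0 := by rintro rfl; simp at hg
  have hdeg := congrArg natDegree hg
  have htrail := congrArg natTrailingDegree hg
  rw [natDegree_X_pow, hf.natDegree_mul' hg0] at hdeg
  rw [natTrailingDegree_X_pow, natTrailingDegree_mul hf.ne_zero hg0] at htrail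
  have := natTrailingDegree_le_natDegree f
  have := natTrailingDegree_le_natDegree g
  exact hf.eq_X_pow_iff_natDegree_le_natTrailingDegree.mpr (by omega)

theorem Monic.isNilpotent_sub_X_pow_of_dvd_X_pow (hf : f.Monic) {k : ℕ} (h : f ∣ X ^ k) :
    IsNilpotent (f - X ^ f.natDegree) := by
  refine Polynomial.isNilpotent_iff.mpr fun i ↦ nilpotent_iff_mem_prime.mpr fun P hP ↦ ?_
  have hfP : f.map (Ideal.Quotient.mk P) = X ^ f.natDegree := by
    rw [← hf.natDegree_map (Ideal.Quotient.mk P)]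
    exact (hf.map _).eq_X_pow_of_dvd_X_pow (by simpa using map_dvd (Ideal.Quotient.mk P) h)
  rw [← Ideal.Quotient.eq_zero_iff_mem, ← coeff_map, Polynomial.map_sub, hfP,
    Polynomial.map_pow, map_X, sub_self, coeff_zero]

theorem Monic.X_mem_radical_span_singleton_iff (hf : f.Monic) :
    X ∈ (Ideal.span {f}).radical ↔ IsNilpotent (f - X ^ f.natDegree) := by
  constructor
  · rintro ⟨k, hk⟩
    exact hf.isNilpotent_sub_X_pow_of_dvd_X_pow (Ideal.mem_span_singleton.mp hk)
  · intro hnil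
    have hnil' : f - X ^ f.natDegree ∈ (Ideal.span {f}).radical :=
      Ideal.radical_mono bot_le (mem_nilradical.mpr hnil)
    have hf' : f ∈ (Ideal.span {f}).radical := Ideal.le_radical (Ideal.mem_span_singleton_self f)
    refine Ideal.mem_radical_of_pow_mem (m := f.natDegree) ?_
    simpa using Ideal.sub_mem _ hf' hnil'

theorem Monic.isNilpotent_sub_X_pow_iff (hf : f.Monic) :
    IsNilpotent (f - X ^ f.natDegree) ↔ ∀ i < f.natDegree, IsNilpotent (f.coeff i) := by
  rw [Polynomial.isNilpotent_iff]
  refine ⟨fun h i hi ↦ by simpa [coeff_X_pow, hi.ne] using h i, fun h i ↦ ?_⟩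
  rcases lt_trichotomy i f.natDegree with hi | rfl | hi
  · simpa [coeff_X_pow, hi.ne] using h i hi
  · simp [hf.coeff_natDegree]
  · simp [coeff_X_pow, hi.ne', coeff_eq_zero_of_natDegree_lt hi]

end Polynomial

theorem stmt0_general {A : Type*} [CommRing A] (n : ℕ) (u : ℕ → A)
    (F : Polynomial A) (hF : F.Monic) (hdeg : F.natDegree = n)
    (hcoeff : ∀ i < n, F.coeff i = (-1 : A) ^ (n - i) * u (n - i)) :
    (∀ j, 1 ≤ j → j ≤ n → IsNilpotent (u j)) ↔
      X ∈ (Ideal.span {F} : Ideal (Polynomial A)).radical := by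
  rw [hF.X_mem_radical_span_singleton_iff, hF.isNilpotent_sub_X_pow_iff, hdeg]
  have hsign (m : ℕ) : IsUnit ((-1 : A) ^ m) := (isUnit_one.neg).pow m
  constructor
  · intro hu i hi
    rw [hcoeff i hi, (hsign _).isNilpotent_unit_mul_of_commute_iff (Commute.all _ _)]
    exact hu (n - i) (by omega) (by omega)
  · intro hc j hj1 hjn
    have := hc (n - j) (by omega)
    rwa [hcoeff _ (by omega), Nat.sub_sub_self hjn,
      (hsign _).isNilpotent_unit_mul_of_commute_iff (Commute.all _ _)] at this

theorem stmt0 {A : Type*} [CommRing A] (n : ℕ) (hn : 0 < n) (u : ℕ → A)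
    (F : Polynomial A) (hF : F.Monic) (hdeg : F.natDegree = n)
    (hcoeff : ∀ i < n, F.coeff i = (-1 : A) ^ (n - i) * u (n - i)) :
    (∀ j, 1 ≤ j → j ≤ n → IsNilpotent (u j)) ↔
      X ∈ (Ideal.span {F} : Ideal (Polynomial A)).radical :=
  stmt0_general n u F hF hdeg hcoeff
end

section
/- Let A be a commutative ring and let F(x) = x^n - u₁x^{n-1} + ... + (-1)^n uₙ in A[x] have all coefficients u₁, ..., uₙ nilpotent. Then there exists a positive integer N and a polynomial G(x) ∈ A[x] such that x^N = F(x)·G(x). -/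
open Polynomial

/-! Modulo `F`, the power `X ^ n` is congruent to the nilpotent polynomial `X ^ n - F`, so some
power of `X ^ n` is divisible by `F`. -/

theorem dvd_pow_of_isNilpotent_sub {R : Type*} [CommRing R] {a f : R}
    (h : IsNilpotent (a - f)) : ∃ k, f ∣ a ^ k := by
  obtain ⟨k, hk⟩ := h
  refine ⟨k, ?_⟩
  simpa [hk] using sub_dvd_pow_sub_pow a (a - f) k

theorem Polynomial.isNilpotent_X_pow_sub {A : Type*} [CommRing A] {n : ℕ} {F : A[X]}
    (hF : F.Monic) (hdeg : F.natDegree = n) (hnil : ∀ i < n, IsNilpotent (F.coeff i)) :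
    IsNilpotent (X ^ n - F) := by
  refine Polynomial.isNilpotent_iff.mpr fun i => ?_
  rw [coeff_sub, coeff_X_pow]
  rcases lt_trichotomy i n with hi | rfl | hi
  · simpa [hi.ne] using (hnil i hi).neg
  · simp [← hdeg, hF.coeff_natDegree]
  · simp [hi.ne', coeff_eq_zero_of_natDegree_lt (hdeg ▸ hi)]

theorem stmt5 {A : Type*} [CommRing A] (n : ℕ) (F : Polynomial A) (hF : F.Monic)
    (hdeg : F.natDegree = n) (hnil : ∀ i < n, IsNilpotent (F.coeff i)) :
    ∃ N : ℕ, 0 < N ∧ ∃ G : Polynomial A, X ^ N = F * G := by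
  obtain ⟨k, hk⟩ := dvd_pow_of_isNilpotent_sub (isNilpotent_X_pow_sub hF hdeg hnil)
  rw [← pow_mul] at hk
  -- the extra factor `X` keeps the exponent positive when `n = 0` or `k = 0`
  obtain ⟨G, hG⟩ := dvd_mul_of_dvd_left hk X
  exact ⟨n * k + 1, Nat.succ_pos _, G, by rw [pow_succ, hG]⟩
end

section
/- Let A be a commutative ring and ε ∈ A a nilpotent element with ε^{2^{m+1}} = 0 and ε^{2^{m+1}-1} ≠ 0. Then N = 2^{m+1} + n - 1 is the smallest positive integer such that x^N lies in the ideal of A[x] generated by x^n - εx^{n-1}. -/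
/-!
The generator factors as `X ^ (n - 1) * (X - C ε)`. Since `X ^ (n - 1)` is monic, hence a
non-zero-divisor, it cancels from `X ^ (n - 1) * (X - C ε) ∣ X ^ (n - 1 + j)`, and by the factor
theorem `X - C ε ∣ X ^ j` holds exactly when `ε ^ j = 0`. The least such `j` is `2 ^ (m + 1)`.
-/

open Polynomial

section

variable {R : Type*} [CommRing R]

theorem X_pow_mul_X_sub_C_dvd_X_pow_add_iff (a : R) (k j : ℕ) :
    X ^ k * (X - C a) ∣ X ^ (k + j) ↔ a ^ j = 0 := by
  rw [pow_add, ((monic_X_pow k).isRegular.left).dvd_cancel_left, dvd_iff_isRoot, IsRoot,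
    eval_pow, eval_X]

theorem X_pow_mul_X_sub_C_dvd_X_pow_iff [Nontrivial R] (a : R) (k N : ℕ) :
    X ^ k * (X - C a) ∣ X ^ N ↔ k < N ∧ a ^ (N - k) = 0 := by
  have hmonic : (X ^ k * (X - C a) : R[X]).Monic := (monic_X_pow k).mul (monic_X_sub_C a)
  constructor
  · intro h
    have hkN : k < N := by
      by_contra! hNk
      refine hmonic.not_dvd_of_natDegree_lt (monic_X_pow N).ne_zero ?_ h
      rw [(monic_X_pow k).natDegree_mul (monic_X_sub_C a), natDegree_X_pow, natDegree_X_pow,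
        natDegree_X_sub_C]
      omega
    rw [← Nat.add_sub_of_le hkN.le, X_pow_mul_X_sub_C_dvd_X_pow_add_iff] at h
    exact ⟨hkN, h⟩
  · rintro ⟨hkN, ha⟩
    rwa [← Nat.add_sub_of_le hkN.le, X_pow_mul_X_sub_C_dvd_X_pow_add_iff]

end

theorem stmt9 {A : Type*} [CommRing A] (n m : ℕ) (hn : 1 ≤ n) (ε : A)
    (hε1 : ε ^ (2 ^ (m + 1)) = 0) (hε2 : ε ^ (2 ^ (m + 1) - 1) ≠ 0) :
    IsLeast {N : ℕ | 0 < N ∧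
        (X : Polynomial A) ^ N ∈ Ideal.span ({X ^ n - C ε * X ^ (n - 1)} : Set (Polynomial A))}
      (2 ^ (m + 1) + n - 1) := by
  have : Nontrivial A := nontrivial_of_ne _ _ hε2
  have hfactor : (X : A[X]) ^ n - C ε * X ^ (n - 1) = X ^ (n - 1) * (X - C ε) := by
    rw [mul_sub, ← pow_succ, Nat.sub_add_cancel hn, mul_comm]
  have hpos : 0 < 2 ^ (m + 1) := Nat.two_pow_pos _
  simp only [IsLeast, lowerBounds, Set.mem_ofPred_eq, Ideal.mem_span_singleton, hfactor,
    X_pow_mul_X_sub_C_dvd_X_pow_iff]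
  refine ⟨⟨by omega, by omega, ?_⟩, ?_⟩
  · rwa [show 2 ^ (m + 1) + n - 1 - (n - 1) = 2 ^ (m + 1) by omega]
  · rintro N ⟨-, -, hzero⟩
    by_contra! hN
    exact hε2 (pow_eq_zero_of_le (by omega) hzero)
end

section
/- Let A be a commutative ring and F(x) = x^n - u₁x^{n-1} + ... + (-1)^n uₙ ∈ A[x] with all uᵢ nilpotent. Then F(x) becomes a unit multiple of a non-zero-divisor and, moreover, every element of the multiplicative set S = {f ∈ A[x] : f(0) is a unit in A} maps to a unit in A[x]/(F(x)); equivalently, the localization map A[x]/(F(x)) → S^{-1}(A[x])/(F(x)) is an isomorphism. -/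
open Polynomial

/-- The multiplicative set of polynomials whose constant term is a unit. -/
noncomputable def unitConstSubmonoid (A : Type*) [CommRing A] : Submonoid (Polynomial A) where
  carrier := {f | IsUnit (f.coeff 0)}
  mul_mem' := by
    intro a b ha hb
    simp only [Set.mem_setOf_eq, Polynomial.mul_coeff_zero] at *
    exact ha.mul hb
  one_mem' := by simp

/-!
Since `F ≡ X ^ n` modulo nilpotent coefficients, the class of `X` in `A[X] ⧸ (F)` is nilpotent.
Hence `f = f(0) + X * q` maps to a unit plus a nilpotent, i.e. to a unit, whenever `f(0)` is a
unit. A quotient in which every element of the submonoid is already invertible is its own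
localization, which gives the isomorphism `A[X] ⧸ (F) ≃ S⁻¹A[X] ⧸ (F)`.
-/

namespace Polynomial

variable {A : Type*} [CommRing A]

theorem Monic.isNilpotent_X_pow_natDegree_sub {F : A[X]} (hF : F.Monic)
    (hnil : ∀ i < F.natDegree, IsNilpotent (F.coeff i)) :
    IsNilpotent (X ^ F.natDegree - F) := by
  rw [Polynomial.isNilpotent_iff]
  intro i
  rcases lt_trichotomy i F.natDegree with hi | rfl | hi
  · simpa [coeff_X_pow, hi.ne] using (hnil i hi).neg
  · simp [hF.coeff_natDegree]
  · simp [coeff_X_pow, hi.ne', coeff_eq_zero_of_natDegree_lt hi]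

theorem Monic.isNilpotent_mk_X {F : A[X]} (hF : F.Monic)
    (hnil : ∀ i < F.natDegree, IsNilpotent (F.coeff i)) :
    IsNilpotent (Ideal.Quotient.mk (Ideal.span {F}) X) := by
  have hF0 : Ideal.Quotient.mk (Ideal.span {F}) F = 0 :=
    Ideal.Quotient.eq_zero_iff_mem.mpr (Ideal.mem_span_singleton_self F)
  refine IsNilpotent.of_pow (m := F.natDegree) ?_
  simpa [hF0] using
    (hF.isNilpotent_X_pow_natDegree_sub hnil).map (Ideal.Quotient.mk (Ideal.span {F}))

theorem isUnit_apply_of_isNilpotent_apply_X {B : Type*} [CommRing B] (φ : A[X] →+* B)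
    (hX : IsNilpotent (φ X)) {f : A[X]} (hf : IsUnit (f.coeff 0)) : IsUnit (φ f) := by
  obtain ⟨q, hq⟩ := X_dvd_sub_C (p := f)
  have hfq : φ f = φ X * φ q + φ (C (f.coeff 0)) := by
    rw [← map_mul, ← hq, ← map_add, sub_add_cancel]
  rw [hfq]
  exact ((Commute.all _ _).isNilpotent_mul_right hX).isUnit_add_right_of_commute
    ((hf.map C).map φ) (Commute.all _ _)

end Polynomial

namespace IsLocalization

variable {R S : Type*} [CommRing R] [CommRing S] [Algebra R S] (M : Submonoid R)
  [IsLocalization M S] {I : Ideal R}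

theorem comap_map_eq_of_isUnit_mk (hM : ∀ m ∈ M, IsUnit (Ideal.Quotient.mk I m)) :
    (I.map (algebraMap R S)).comap (algebraMap R S) = I := by
  refine le_antisymm (fun x hx => ?_) Ideal.le_comap_map
  obtain ⟨m, hm, hmx⟩ := (algebraMap_mem_map_algebraMap_iff M (S := S) I x).mp hx
  rw [← Ideal.Quotient.eq_zero_iff_mem, map_mul] at hmx
  rw [← Ideal.Quotient.eq_zero_iff_mem]
  exact (hM m hm).mul_right_eq_zero.mp hmx

theorem bijective_quotientMap_of_isUnit_mk (hM : ∀ m ∈ M, IsUnit (Ideal.Quotient.mk I m))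
    {J : Ideal S} {K : Ideal R} (hJ : J = I.map (algebraMap R S)) (hK : K = I)
    (H : K ≤ J.comap (algebraMap R S)) :
    Function.Bijective (Ideal.quotientMap J (algebraMap R S) H) := by
  subst hJ hK
  have hunits : Algebra.algebraMapSubmonoid (R ⧸ K) M ≤ IsUnit.submonoid (R ⧸ K) := by
    rintro _ ⟨m, hm, rfl⟩
    exact hM m hm
  exact (atUnits (R ⧸ K) (Algebra.algebraMapSubmonoid (R ⧸ K) M)
    (S := S ⧸ K.map (algebraMap R S)) hunits).bijective

end IsLocalization

theorem stmt15 {A : Type*} [CommRing A] (n : ℕ) (F : Polynomial A) (hF : F.Monic)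
    (hdeg : F.natDegree = n) (hnil : ∀ i < n, IsNilpotent (F.coeff i)) :
    (∀ f ∈ unitConstSubmonoid A, IsUnit (Ideal.Quotient.mk (Ideal.span {F}) f)) ∧
    Function.Bijective (Ideal.quotientMap
      (Ideal.span {algebraMap (Polynomial A) (Localization (unitConstSubmonoid A)) F})
      (algebraMap (Polynomial A) (Localization (unitConstSubmonoid A)))
      (by rw [Ideal.span_le])) := by
  subst hdeg
  have hunit : ∀ f ∈ unitConstSubmonoid A, IsUnit (Ideal.Quotient.mk (Ideal.span {F}) f) :=
    fun f hf => isUnit_apply_of_isNilpotent_apply_X _ (hF.isNilpotent_mk_X hnil) hf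
  have hspan : Ideal.span {algebraMap A[X] (Localization (unitConstSubmonoid A)) F} =
      (Ideal.span {F}).map (algebraMap A[X] (Localization (unitConstSubmonoid A))) := by
    rw [Ideal.map_span, Set.image_singleton]
  refine ⟨hunit, IsLocalization.bijective_quotientMap_of_isUnit_mk _ hunit hspan ?_ _⟩
  -- the source ideal of the `quotientMap` elaborates to `span (comap (algebraMap _ _) (span {_}))`
  rw [Ideal.span_eq, hspan, IsLocalization.comap_map_eq_of_isUnit_mk _ hunit]
end
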